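/- Let U ∈ Mat(d×R) with orthonormal columns (UᵀU = I_R), Π_U = UUᵀ, Π_U^⊥ = I - Π_U, and Σ a d×d positive semidefinite matrix with ‖Π_U^⊥ Σ^{1/2}‖_F < ε. Then ‖Σ - Π_U Σ Π_U‖_F² ≤ 2 λ_max(Σ) ε². -/

import Mathlib

/-!
With `Q = 1 - P` and `Σ = S²`, write `Σ - PΣP = QΣ + P(ΣQ)`; the two summands are
Frobenius-orthogonal because `QP = 0`. As `QΣ = (ΣQ)ᵀ` and `P` is a contraction, both squared
norms are at most `‖ΣQ‖² = ‖S (SQ)‖² ≤ λ_max(Σ) ‖SQ‖² = λ_max(Σ) ‖QS‖²`, the inequality coming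
from `S² ≤ λ_max(Σ) • 1` in the Loewner order.
-/

open Matrix

section

open scoped ComplexOrder

/-- The positive semidefinite square root of a positive semidefinite matrix (as defined in
Mathlib of December 2024; removed from current Mathlib). -/
noncomputable def Matrix.PosSemidef.sqrt {n 𝕜 : Type*} [Fintype n] [RCLike 𝕜] [DecidableEq n]
    {A : Matrix n n 𝕜} (hA : A.PosSemidef) : Matrix n n 𝕜 :=
  hA.1.eigenvectorUnitary.1 * diagonal ((↑) ∘ Real.sqrt ∘ hA.1.eigenvalues) *
  (star hA.1.eigenvectorUnitary : Matrix n n 𝕜)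

end

open scoped MatrixOrder ComplexOrder

namespace Matrix

variable {m n 𝕜 : Type*} [Fintype m] [Fintype n] [RCLike 𝕜]

lemma PosSemidef.sqrt_eq_cfcSqrt [DecidableEq n] {A : Matrix n n 𝕜} (hA : A.PosSemidef) :
    hA.sqrt = CFC.sqrt A := by
  rw [CFC.sqrt_eq_real_sqrt A hA.nonneg, cfcₙ_eq_cfc, hA.1.cfc_eq]
  rfl

lemma PosSemidef.sqrt_mul_self [DecidableEq n] {A : Matrix n n 𝕜} (hA : A.PosSemidef) :
    hA.sqrt * hA.sqrt = A := by
  rw [hA.sqrt_eq_cfcSqrt, CFC.sqrt_mul_sqrt_self A hA.nonneg]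

lemma transpose_eq_self_of_isSelfAdjoint {ι : Type*} {A : Matrix ι ι ℝ} (hA : IsSelfAdjoint A) :
    Aᵀ = A := by
  rwa [← conjTranspose_eq_transpose_of_trivial]

lemma PosSemidef.transpose_sqrt [DecidableEq n] {A : Matrix n n ℝ} (hA : A.PosSemidef) :
    hA.sqrtᵀ = hA.sqrt := by
  rw [hA.sqrt_eq_cfcSqrt]
  exact transpose_eq_self_of_isSelfAdjoint (CFC.sqrt_nonneg A).isSelfAdjoint

lemma IsHermitian.le_iSup_eigenvalues_smul_one [DecidableEq n] {A : Matrix n n 𝕜}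
    (hA : A.IsHermitian) : A ≤ (⨆ i, hA.eigenvalues i) • (1 : Matrix n n 𝕜) := by
  rw [← Algebra.algebraMap_eq_smul_one]
  refine le_algebraMap_of_spectrum_le fun x hx => ?_
  obtain ⟨i, rfl⟩ := hA.spectrum_real_eq_range_eigenvalues ▸ hx
  exact le_ciSup (Set.finite_range _).bddAbove i

lemma isStarProjection_mul_transpose [DecidableEq m] {U : Matrix n m ℝ} (hU : Uᵀ * U = 1) :
    IsStarProjection (U * Uᵀ) where
  isIdempotentElem := by
    rw [IsIdempotentElem, Matrix.mul_assoc, ← Matrix.mul_assoc Uᵀ, hU, Matrix.one_mul]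
  isSelfAdjoint := by
    rw [IsSelfAdjoint, star_eq_conjTranspose, conjTranspose_eq_transpose_of_trivial,
      transpose_mul, transpose_transpose]

def frobNormSq (X : Matrix m n ℝ) : ℝ := trace (Xᵀ * X)

lemma frobNormSq_transpose (X : Matrix m n ℝ) : frobNormSq Xᵀ = frobNormSq X := by
  rw [frobNormSq, frobNormSq, transpose_transpose, trace_mul_comm]

lemma frobNormSq_add_of_trace_eq_zero {X Y : Matrix m n ℝ} (h : trace (Xᵀ * Y) = 0) :
    frobNormSq (X + Y) = frobNormSq X + frobNormSq Y := by
  have h' : trace (Yᵀ * X) = 0 := by rw [← trace_transpose, transpose_mul, transpose_transpose, h]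
  simp only [frobNormSq, transpose_add, Matrix.add_mul, Matrix.mul_add, trace_add, h, h']
  ring

lemma frobNormSq_mul_le [DecidableEq m] {S : Matrix m m ℝ} {c : ℝ} (hS : Sᵀ * S ≤ c • 1)
    (Y : Matrix m n ℝ) :
    frobNormSq (S * Y) ≤ c * frobNormSq Y := by
  have h := ((le_iff.mp hS).conjTranspose_mul_mul_same Y).trace_nonneg
  rw [conjTranspose_eq_transpose_of_trivial, Matrix.mul_sub, Matrix.sub_mul, trace_sub,
    Matrix.mul_smul, Matrix.smul_mul, Matrix.mul_one, trace_smul, smul_eq_mul] at h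
  rw [frobNormSq, frobNormSq, transpose_mul, Matrix.mul_assoc, ← Matrix.mul_assoc Sᵀ,
    ← Matrix.mul_assoc]
  linarith

lemma frobNormSq_mul_le_of_isStarProjection [DecidableEq m] {P : Matrix m m ℝ}
    (hP : IsStarProjection P) (Y : Matrix m n ℝ) : frobNormSq (P * Y) ≤ frobNormSq Y := by
  have hPP : Pᵀ * P = P := by
    rw [transpose_eq_self_of_isSelfAdjoint hP.isSelfAdjoint, hP.isIdempotentElem.eq]
  simpa using frobNormSq_mul_le (c := 1) (by rw [hPP, one_smul]; exact hP.le_one) Y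

theorem frobNormSq_sub_mul_mul_le [DecidableEq m] {P S Sig : Matrix m m ℝ} {c : ℝ}
    (hP : IsStarProjection P) (hS : Sᵀ = S) (hSig : S * S = Sig) (hc : Sig ≤ c • 1) :
    frobNormSq (Sig - P * Sig * P) ≤ 2 * c * frobNormSq ((1 - P) * S) := by
  set Q := 1 - P with hQ
  have hQt : Qᵀ = Q := transpose_eq_self_of_isSelfAdjoint hP.one_sub.isSelfAdjoint
  have hSigt : Sigᵀ = Sig := by rw [← hSig, transpose_mul, hS]
  have hdecomp : Sig - P * Sig * P = Q * Sig + P * (Sig * Q) := by rw [hQ]; noncomm_ring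
  have horth : trace ((Q * Sig)ᵀ * (P * (Sig * Q))) = 0 := by
    rw [transpose_mul, hQt, hSigt, Matrix.mul_assoc, ← Matrix.mul_assoc Q P, hP.one_sub_mul_self,
      Matrix.zero_mul, Matrix.mul_zero, trace_zero]
  have hSigQ : frobNormSq (Sig * Q) ≤ c * frobNormSq (Q * S) := by
    have hStS : Sᵀ * S ≤ c • 1 := by rwa [hS, hSig]
    calc frobNormSq (Sig * Q) = frobNormSq (S * (S * Q)) := by rw [← hSig, Matrix.mul_assoc]
      _ ≤ c * frobNormSq (S * Q) := frobNormSq_mul_le hStS _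
      _ = c * frobNormSq (Q * S) := by
        rw [← frobNormSq_transpose (Q * S), transpose_mul, hS, hQt]
  have hQSig : frobNormSq (Q * Sig) = frobNormSq (Sig * Q) := by
    rw [← frobNormSq_transpose, transpose_mul, hQt, hSigt]
  rw [hdecomp, frobNormSq_add_of_trace_eq_zero horth, hQSig]
  linarith [frobNormSq_mul_le_of_isStarProjection hP (Sig * Q)]

end Matrix

/-- If `U` has orthonormal columns, `Π_U = U Uᵀ`, `Π_U^⊥ = 1 - Π_U`, and
`‖Π_U^⊥ Sigma^{1/2}‖_F < ε`, then `‖Sigma - Pi Sigma Pi‖_F² ≤ 2 lambda_max(Sigma) ε²`. -/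
theorem sigma_projection_error_bound {d R : ℕ}
    (U : Matrix (Fin d) (Fin R) ℝ) (hU : Uᵀ * U = 1)
    (Sig : Matrix (Fin d) (Fin d) ℝ) (hSig : Sig.PosSemidef) (ε : ℝ)
    (hε : Real.sqrt (Matrix.trace
        ((((1 : Matrix (Fin d) (Fin d) ℝ) - U * Uᵀ) * hSig.sqrt)ᵀ *
          (((1 : Matrix (Fin d) (Fin d) ℝ) - U * Uᵀ) * hSig.sqrt))) < ε) :
    Matrix.trace ((Sig - (U * Uᵀ) * Sig * (U * Uᵀ))ᵀ *
        (Sig - (U * Uᵀ) * Sig * (U * Uᵀ))) ≤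
      2 * (⨆ i, hSig.1.eigenvalues i) * ε ^ 2 := by
  have hbound := frobNormSq_sub_mul_mul_le (isStarProjection_mul_transpose hU)
    hSig.transpose_sqrt hSig.sqrt_mul_self hSig.1.le_iSup_eigenvalues_smul_one
  have hlam : 0 ≤ ⨆ i, hSig.1.eigenvalues i := Real.iSup_nonneg hSig.eigenvalues_nonneg
  have hfrob : frobNormSq ((1 - U * Uᵀ) * hSig.sqrt) ≤ ε ^ 2 := (Real.lt_sq_of_sqrt_lt hε).le
  calc _ ≤ 2 * (⨆ i, hSig.1.eigenvalues i) * frobNormSq ((1 - U * Uᵀ) * hSig.sqrt) := hbound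
    _ ≤ _ := by gcongr
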